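/- For every signified 2-dimensional grid (G, Σ), there exists a signified homomorphism from (G, Σ) to SP_9; consequently, the signified chromatic number of the class of 2-dimensional grids is at most 9. -/

import Mathlib

open Polynomial

/-- GF(9) constructed as GF(3)[x]/(x²+1). -/
abbrev F9 : Type := AdjoinRoot (X ^ 2 + 1 : (ZMod 3)[X])

/-- The class of the polynomial x. -/
noncomputable def ξ : F9 := AdjoinRoot.root _

/-- `a` is a nonzero square in GF(9). -/
def Sq (a : F9) : Prop := a ≠ 0 ∧ ∃ b : F9, b ^ 2 = a

/-!
In the coordinates `a + bξ` of GF(9) over GF(3) the nonzero squares are `±1, ±ξ`, so `SP₉` is the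
rook's graph on a 3 × 3 board: positive edges join cells in a common row or column.

A grid is coloured row by row, left to right. A cell must respect the signs towards the cell above
and the cell on its left; since these two may have the same colour, a greedy choice can get stuck.
Instead we keep, along each row, two colourings of the row so far whose last cells differ: the
rook's graph has, for any `a ≠ b`, any `B` and any signs, two colours with the prescribed sign
towards `B` and towards `a` or `b`, and this propagates the invariant one cell further.
-/

section SignedTarget

variable {α : Type*} (E : α → α → Prop)

/-- `E u v` means that the edge `uv` of the target is positive. -/
def IsSignedEdge (s : Bool) (u v : α) : Prop :=
  u ≠ v ∧ (E u v ↔ s = true)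

instance [DecidableEq α] [DecidableRel E] (s : Bool) (u v : α) :
    Decidable (IsSignedEdge E s u v) :=
  inferInstanceAs (Decidable (_ ∧ _))

structure TwoChoiceProperty : Prop where
  start : ∀ (B : α) (t : Bool), {x | IsSignedEdge E t B x}.Nontrivial
  step : ∀ (a b B : α) (s t : Bool), a ≠ b →
    {x | IsSignedEdge E t B x ∧ (IsSignedEdge E s a x ∨ IsSignedEdge E s b x)}.Nontrivial

/-- `c` colours cells `0, …, N` of a row lying below the row coloured `above`. -/
def IsRowColoring (above : ℕ → α) (sv sh : ℕ → Bool) (N : ℕ) (c : ℕ → α) : Prop :=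
  (∀ j ≤ N, IsSignedEdge E (sv j) (above j) (c j)) ∧
    ∀ j < N, IsSignedEdge E (sh j) (c j) (c (j + 1))

def IsGridColoring (sh sv : ℕ → ℕ → Bool) (m n : ℕ) (c : ℕ → ℕ → α) : Prop :=
  (∀ i ≤ m, ∀ j < n, IsSignedEdge E (sh i j) (c i j) (c i (j + 1))) ∧
    ∀ i < m, ∀ j ≤ n, IsSignedEdge E (sv i j) (c i j) (c (i + 1) j)

variable {E}

theorem IsRowColoring.update {above : ℕ → α} {sv sh : ℕ → Bool} {N : ℕ} {c : ℕ → α} {x : α}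
    (hc : IsRowColoring E above sv sh N c) (hv : IsSignedEdge E (sv (N + 1)) (above (N + 1)) x)
    (hh : IsSignedEdge E (sh N) (c N) x) :
    IsRowColoring E above sv sh (N + 1) (Function.update c (N + 1) x) := by
  constructor
  · intro j hj
    rcases Nat.le_succ_iff.mp hj with hj | rfl
    · rw [Function.update_of_ne (by omega)]
      exact hc.1 j hj
    · rwa [Function.update_self]
  · intro j hj
    rw [Function.update_of_ne (by omega)]
    rcases Nat.lt_succ_iff_lt_or_eq.mp hj with hj | rfl
    · rw [Function.update_of_ne (by omega)]
      exact hc.2 j hj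
    · rwa [Function.update_self]

theorem IsGridColoring.update {sh sv : ℕ → ℕ → Bool} {m n : ℕ} {c : ℕ → ℕ → α} {d : ℕ → α}
    (hc : IsGridColoring E sh sv m n c) (hd : IsRowColoring E (c m) (sv m) (sh (m + 1)) n d) :
    IsGridColoring E sh sv (m + 1) n (Function.update c (m + 1) d) := by
  constructor
  · intro i hi j hj
    rcases Nat.le_succ_iff.mp hi with hi | rfl
    · rw [Function.update_of_ne (by omega)]
      exact hc.1 i hi j hj
    · rw [Function.update_self]
      exact hd.2 j hj
  · intro i hi j hj
    rw [Function.update_of_ne (by omega)]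
    rcases Nat.lt_succ_iff_lt_or_eq.mp hi with hi | rfl
    · rw [Function.update_of_ne (by omega)]
      exact hc.2 i hi j hj
    · rw [Function.update_self]
      exact hd.1 j hj

theorem TwoChoiceProperty.nontrivial_rowColoring_ends (hE : TwoChoiceProperty E) (above : ℕ → α)
    (sv sh : ℕ → Bool) (N : ℕ) :
    ((fun c : ℕ → α => c N) '' {c | IsRowColoring E above sv sh N c}).Nontrivial := by
  induction N with
  | zero =>
    refine (hE.start (above 0) (sv 0)).mono fun x hx => ⟨fun _ => x, ⟨?_, ?_⟩, rfl⟩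
    · intro j hj
      rwa [Nat.le_zero.mp hj]
    · intro j hj
      exact absurd hj (Nat.not_lt_zero j)
  | succ N ih =>
    obtain ⟨_, ⟨c₁, hc₁, rfl⟩, _, ⟨c₂, hc₂, rfl⟩, hne⟩ := ih
    refine (hE.step (c₁ N) (c₂ N) (above (N + 1)) (sh N) (sv (N + 1)) hne).mono ?_
    rintro x ⟨hv, hh | hh⟩
    · exact ⟨_, hc₁.update hv hh, Function.update_self ..⟩
    · exact ⟨_, hc₂.update hv hh, Function.update_self ..⟩

theorem TwoChoiceProperty.exists_isGridColoring [Nonempty α] (hE : TwoChoiceProperty E)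
    (sh sv : ℕ → ℕ → Bool) (m n : ℕ) : ∃ c, IsGridColoring E sh sv m n c := by
  have row (above : ℕ → α) (sv' sh' : ℕ → Bool) : ∃ d, IsRowColoring E above sv' sh' n d :=
    let ⟨_, ⟨d, hd, _⟩, _⟩ := hE.nontrivial_rowColoring_ends above sv' sh' n
    ⟨d, hd⟩
  induction m with
  | zero =>
    -- colour the first row below a dummy row, then forget the vertical constraints
    obtain ⟨d, hd⟩ := row (fun _ => Classical.arbitrary α) (fun _ => true) (sh 0)
    refine ⟨fun _ => d, fun i hi j hj => ?_, fun i hi => absurd hi (Nat.not_lt_zero i)⟩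
    rw [Nat.le_zero.mp hi]
    exact hd.2 j hj
  | succ m ih =>
    obtain ⟨c, hc⟩ := ih
    obtain ⟨d, hd⟩ := row (c m) (sv m) (sh (m + 1))
    exact ⟨_, hc.update hd⟩

end SignedTarget

def IsRookMove (d : ZMod 3 × ZMod 3) : Prop := d ≠ 0 ∧ (d.1 = 0 ∨ d.2 = 0)

instance : DecidablePred IsRookMove := fun _ => inferInstanceAs (Decidable (_ ∧ _))

set_option synthInstance.maxSize 1000 in
theorem twoChoiceProperty_rook :
    TwoChoiceProperty fun u v : ZMod 3 × ZMod 3 => IsRookMove (v - u) := by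
  constructor <;> unfold Set.Nontrivial <;> decide

theorem monic_X_sq_add_one : (X ^ 2 + 1 : (ZMod 3)[X]).Monic := by monicity!

theorem natDegree_X_sq_add_one : (X ^ 2 + 1 : (ZMod 3)[X]).natDegree = 2 := by compute_degree!

theorem ξ_sq : ξ ^ 2 = -1 := by
  have h := AdjoinRoot.eval₂_root (X ^ 2 + 1 : (ZMod 3)[X])
  simp only [eval₂_add, eval₂_X_pow, eval₂_one] at h
  unfold ξ
  linear_combination h

noncomputable def coords : (ZMod 3 × ZMod 3) ≃ₗ[ZMod 3] F9 :=
  (LinearEquiv.finTwoArrow (ZMod 3) (ZMod 3)).symm ≪≫ₗ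
    ((AdjoinRoot.powerBasis' monic_X_sq_add_one).basis.reindex
      (finCongr natDegree_X_sq_add_one)).equivFun.symm

theorem coords_apply (p : ZMod 3 × ZMod 3) :
    coords p = AdjoinRoot.of _ p.1 + AdjoinRoot.of _ p.2 * ξ := by
  simp only [coords, LinearEquiv.trans_apply, Module.Basis.equivFun_symm_apply, Fin.sum_univ_two,
    Module.Basis.coe_reindex, PowerBasis.coe_basis, Function.comp_apply]
  -- the exponents are `Fin 2` literals cast along `natDegree = 2`, which `simp` cannot see through
  show p.1 • ξ ^ 0 + p.2 • ξ ^ 1 = _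
  simp [Algebra.smul_def]

theorem coords_sq (q : ZMod 3 × ZMod 3) :
    coords q ^ 2 = coords (q.1 ^ 2 - q.2 ^ 2, 2 * q.1 * q.2) := by
  simp only [coords_apply, map_sub, map_mul, map_pow, map_ofNat]
  linear_combination AdjoinRoot.of _ q.2 ^ 2 * ξ_sq

theorem sq_coords_iff (d : ZMod 3 × ZMod 3) : Sq (coords d) ↔ IsRookMove d := by
  have squares : ∀ d : ZMod 3 × ZMod 3,
      (∃ q : ZMod 3 × ZMod 3, (q.1 ^ 2 - q.2 ^ 2, 2 * q.1 * q.2) = d) ↔ d.1 = 0 ∨ d.2 = 0 := by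
    decide
  rw [Sq, IsRookMove, coords.map_ne_zero_iff, coords.surjective.exists, ← squares]
  simp only [coords_sq, coords.injective.eq_iff]

theorem isSignedEdge_coords_iff (s : Bool) (u v : ZMod 3 × ZMod 3) :
    IsSignedEdge (fun a b => Sq (b - a)) s (coords u) (coords v) ↔
      IsSignedEdge (fun a b => IsRookMove (b - a)) s u v := by
  simp only [IsSignedEdge, coords.injective.ne_iff, ← map_sub, sq_coords_iff]

theorem exists_nat_extension {β : Type*} [Inhabited β] {a b : ℕ} (σ : Fin a → Fin b → β) :
    ∃ τ : ℕ → ℕ → β, ∀ (i : Fin a) (j : Fin b), τ i j = σ i j :=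
  ⟨fun i j => if h : i < a ∧ j < b then σ ⟨i, h.1⟩ ⟨j, h.2⟩ else default, by simp⟩

/-- Theorem 1: every signified 2-dimensional grid admits a signified
homomorphism into SP₉ (a signed graph on 9 vertices); hence the signified
chromatic number of grids is at most 9. -/
theorem grids_to_SP9 :
    Nat.card F9 = 9 ∧
    ∀ (m n : ℕ) (σh : Fin (m + 1) → Fin n → Bool)
      (σv : Fin m → Fin (n + 1) → Bool),
      ∃ c : Fin (m + 1) → Fin (n + 1) → F9,
        (∀ (i : Fin (m + 1)) (j : Fin n),
          c i j.castSucc ≠ c i j.succ ∧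
          (Sq (c i j.succ - c i j.castSucc) ↔ σh i j = true)) ∧
        (∀ (i : Fin m) (j : Fin (n + 1)),
          c i.castSucc j ≠ c i.succ j ∧
          (Sq (c i.succ j - c i.castSucc j) ↔ σv i j = true)) := by
  refine ⟨by simp [← Nat.card_congr coords.toEquiv], fun m n σh σv => ?_⟩
  obtain ⟨sh, hsh⟩ := exists_nat_extension σh
  obtain ⟨sv, hsv⟩ := exists_nat_extension σv
  obtain ⟨c, hH, hV⟩ := twoChoiceProperty_rook.exists_isGridColoring sh sv m n
  refine ⟨fun i j => coords (c i j), fun i j => ?_, fun i j => ?_⟩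
  · rw [← hsh]
    exact (isSignedEdge_coords_iff ..).2 (hH i (Nat.lt_succ_iff.mp i.isLt) j j.isLt)
  · rw [← hsv]
    exact (isSignedEdge_coords_iff ..).2 (hV i i.isLt j (Nat.lt_succ_iff.mp j.isLt))
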